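/- arXiv:2012.12614 — 5 statements merged into one kernel-verified Lean document; each statement's English description precedes it below -/
import Mathlib

section
/- For all a ∈ ℝ⁹ and all γ ∈ ℝ, d(R_z(γ) · a) = d(a), where d(a) = Σ_{k=1}^{5} (aᵀSₖa)². -/
open Matrix Real

/-- The reference harmonic coordinates ã = (0,0,0,0,√(7/12),0,0,0,√(5/12)). -/
noncomputable def aref : Fin 9 → ℝ :=
  ![0, 0, 0, 0, Real.sqrt (7/12), 0, 0, 0, Real.sqrt (5/12)]

noncomputable def S1 : Matrix (Fin 9) (Fin 9) ℝ :=
  Real.sqrt 2 • Matrix.diagonal ![28, 7, -8, -17, -20, -17, -8, 7, 28]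

noncomputable def S2 : Matrix (Fin 9) (Fin 9) ℝ :=
  Real.sqrt 3 •
  !![0, 14, 0, 0, 0, 0, 0, 0, 0;
     14, 0, 5*Real.sqrt 7, 0, 0, 0, 0, 0, 0;
     0, 5*Real.sqrt 7, 0, 9, 0, 0, 0, 0, 0;
     0, 0, 9, 0, 0, 0, 0, 0, 0;
     0, 0, 0, 0, 0, 2*Real.sqrt 5, 0, 0, 0;
     0, 0, 0, 0, 2*Real.sqrt 5, 0, 9, 0, 0;
     0, 0, 0, 0, 0, 9, 0, 5*Real.sqrt 7, 0;
     0, 0, 0, 0, 0, 0, 5*Real.sqrt 7, 0, 14;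
     0, 0, 0, 0, 0, 0, 0, 14, 0]

noncomputable def S3 : Matrix (Fin 9) (Fin 9) ℝ :=
  Real.sqrt 3 •
  !![0, 0, 0, 0, 0, 0, 0, 14, 0;
     0, 0, 0, 0, 0, 0, 5*Real.sqrt 7, 0, -14;
     0, 0, 0, 0, 0, 9, 0, -5*Real.sqrt 7, 0;
     0, 0, 0, 0, 2*Real.sqrt 5, 0, -9, 0, 0;
     0, 0, 0, 2*Real.sqrt 5, 0, 0, 0, 0, 0;
     0, 0, 9, 0, 0, 0, 0, 0, 0;
     0, 5*Real.sqrt 7, 0, -9, 0, 0, 0, 0, 0;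
     14, 0, -5*Real.sqrt 7, 0, 0, 0, 0, 0, 0;
     0, -14, 0, 0, 0, 0, 0, 0, 0]

noncomputable def S4 : Matrix (Fin 9) (Fin 9) ℝ :=
  Real.sqrt 6 •
  !![0, 0, 2*Real.sqrt 7, 0, 0, 0, 0, 0, 0;
     0, 0, 0, 3*Real.sqrt 7, 0, 0, 0, 0, 0;
     2*Real.sqrt 7, 0, 0, 0, 0, 0, 0, 0, 0;
     0, 3*Real.sqrt 7, 0, 10, 0, 0, 0, 0, 0;
     0, 0, 0, 0, 0, 0, 6*Real.sqrt 5, 0, 0;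
     0, 0, 0, 0, 0, -10, 0, 3*Real.sqrt 7, 0;
     0, 0, 0, 0, 6*Real.sqrt 5, 0, 0, 0, 2*Real.sqrt 7;
     0, 0, 0, 0, 0, 3*Real.sqrt 7, 0, 0, 0;
     0, 0, 0, 0, 0, 0, 2*Real.sqrt 7, 0, 0]

noncomputable def S5 : Matrix (Fin 9) (Fin 9) ℝ :=
  Real.sqrt 6 •
  !![0, 0, 0, 0, 0, 0, 2*Real.sqrt 7, 0, 0;
     0, 0, 0, 0, 0, 3*Real.sqrt 7, 0, 0, 0;
     0, 0, 0, 0, 6*Real.sqrt 5, 0, 0, 0, -2*Real.sqrt 7;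
     0, 0, 0, 0, 0, -10, 0, -3*Real.sqrt 7, 0;
     0, 0, 6*Real.sqrt 5, 0, 0, 0, 0, 0, 0;
     0, 3*Real.sqrt 7, 0, -10, 0, 0, 0, 0, 0;
     2*Real.sqrt 7, 0, 0, 0, 0, 0, 0, 0, 0;
     0, 0, 0, -3*Real.sqrt 7, 0, 0, 0, 0, 0;
     0, 0, -2*Real.sqrt 7, 0, 0, 0, 0, 0, 0]

/-- The five quadric matrices S₁,…,S₅, indexed by `Fin 5`. -/
noncomputable def S : Fin 5 → Matrix (Fin 9) (Fin 9) ℝ := ![S1, S2, S3, S4, S5]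

/-- Rotation about the z-axis acting on degree-4 spherical harmonic coefficients. -/
noncomputable def Rz (γ : ℝ) : Matrix (Fin 9) (Fin 9) ℝ :=
  !![Real.cos (4*γ), 0, 0, 0, 0, 0, 0, 0, Real.sin (4*γ);
     0, Real.cos (3*γ), 0, 0, 0, 0, 0, Real.sin (3*γ), 0;
     0, 0, Real.cos (2*γ), 0, 0, 0, Real.sin (2*γ), 0, 0;
     0, 0, 0, Real.cos γ, 0, Real.sin γ, 0, 0, 0;
     0, 0, 0, 0, 1, 0, 0, 0, 0;
     0, 0, 0, -Real.sin γ, 0, Real.cos γ, 0, 0, 0;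
     0, 0, -Real.sin (2*γ), 0, 0, 0, Real.cos (2*γ), 0, 0;
     0, -Real.sin (3*γ), 0, 0, 0, 0, 0, Real.cos (3*γ), 0;
     -Real.sin (4*γ), 0, 0, 0, 0, 0, 0, 0, Real.cos (4*γ)]

/-- The quarter-turn about the x-axis, X = R_x(π/2). -/
noncomputable def Xmat : Matrix (Fin 9) (Fin 9) ℝ :=
  (1/8 : ℝ) •
  !![0, 0, 0, 0, 0, 2*Real.sqrt 14, 0, -2*Real.sqrt 2, 0;
     0, -6, 0, 2*Real.sqrt 7, 0, 0, 0, 0, 0;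
     0, 0, 0, 0, 0, 2*Real.sqrt 2, 0, 2*Real.sqrt 14, 0;
     0, 2*Real.sqrt 7, 0, 6, 0, 0, 0, 0, 0;
     0, 0, 0, 0, 3, 0, 2*Real.sqrt 5, 0, Real.sqrt 35;
     -2*Real.sqrt 14, 0, -2*Real.sqrt 2, 0, 0, 0, 0, 0, 0;
     0, 0, 0, 0, 2*Real.sqrt 5, 0, 4, 0, -2*Real.sqrt 7;
     2*Real.sqrt 2, 0, -2*Real.sqrt 14, 0, 0, 0, 0, 0, 0;
     0, 0, 0, 0, Real.sqrt 35, 0, -2*Real.sqrt 7, 0, 1]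

/-- Rotation about the y-axis: R_y(β) = X · R_z(β) · Xᵀ. -/
noncomputable def Ry (β : ℝ) : Matrix (Fin 9) (Fin 9) ℝ := Xmat * Rz β * Xmatᵀ

/-- Rotation about the x-axis: R_x(α) = R_y(π/2)ᵀ · R_z(α) · R_y(π/2). -/
noncomputable def Rx (α : ℝ) : Matrix (Fin 9) (Fin 9) ℝ :=
  (Ry (Real.pi/2))ᵀ * Rz α * Ry (Real.pi/2)

/-- The deviation measure d(a) = Σₖ (aᵀ Sₖ a)². -/
noncomputable def dmeas (a : Fin 9 → ℝ) : ℝ :=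
  ∑ k : Fin 5, (a ⬝ᵥ (S k).mulVec a) ^ 2

section auxRz

set_option maxHeartbeats 1600000

private lemma hcs (γ : ℝ) (m : ℝ) :
    Real.cos (m*γ) * Real.cos ((m-1)*γ) + Real.sin (m*γ) * Real.sin ((m-1)*γ) = Real.cos γ := by
  have h := Real.cos_sub (m*γ) ((m-1)*γ)
  rw [show m*γ - (m-1)*γ = γ by ring] at h
  linarith

private lemma hss (γ : ℝ) (m : ℝ) :
    Real.sin (m*γ) * Real.cos ((m-1)*γ) - Real.cos (m*γ) * Real.sin ((m-1)*γ) = Real.sin γ := by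
  have h := Real.sin_sub (m*γ) ((m-1)*γ)
  rw [show m*γ - (m-1)*γ = γ by ring] at h
  linarith

private lemma hcs2 (γ : ℝ) (m : ℝ) :
    Real.cos (m*γ) * Real.cos ((m-2)*γ) + Real.sin (m*γ) * Real.sin ((m-2)*γ) = Real.cos (2*γ) := by
  have h := Real.cos_sub (m*γ) ((m-2)*γ)
  rw [show m*γ - (m-2)*γ = 2*γ by ring] at h
  linarith

private lemma hss2 (γ : ℝ) (m : ℝ) :
    Real.sin (m*γ) * Real.cos ((m-2)*γ) - Real.cos (m*γ) * Real.sin ((m-2)*γ) = Real.sin (2*γ) := by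
  have h := Real.sin_sub (m*γ) ((m-2)*γ)
  rw [show m*γ - (m-2)*γ = 2*γ by ring] at h
  linarith

private lemma key1 (γ a0 a1 a2 a3 a4 a5 a6 a7 a8 : ℝ) :
    ((Rz γ).mulVec ![a0,a1,a2,a3,a4,a5,a6,a7,a8]) ⬝ᵥ S1.mulVec ((Rz γ).mulVec ![a0,a1,a2,a3,a4,a5,a6,a7,a8])
      = (![a0,a1,a2,a3,a4,a5,a6,a7,a8] ⬝ᵥ S1.mulVec ![a0,a1,a2,a3,a4,a5,a6,a7,a8]) := by
  have p1 := Real.sin_sq_add_cos_sq γ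
  have p2 := Real.sin_sq_add_cos_sq (2*γ)
  have p3 := Real.sin_sq_add_cos_sq (3*γ)
  have p4 := Real.sin_sq_add_cos_sq (4*γ)
  simp [Rz, S1, S2, S3, S4, S5, Matrix.mulVec, dotProduct, Fin.sum_univ_succ,
    Matrix.diagonal]
  linear_combination (Real.sqrt 2 * (28*(a0^2 + a8^2))) * p4
    + (Real.sqrt 2 * (7*(a1^2 + a7^2))) * p3
    + (Real.sqrt 2 * (-8*(a2^2 + a6^2))) * p2
    + (Real.sqrt 2 * (-17*(a3^2 + a5^2))) * p1

private lemma key2 (γ a0 a1 a2 a3 a4 a5 a6 a7 a8 : ℝ) :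
    ((Rz γ).mulVec ![a0,a1,a2,a3,a4,a5,a6,a7,a8]) ⬝ᵥ S2.mulVec ((Rz γ).mulVec ![a0,a1,a2,a3,a4,a5,a6,a7,a8])
      = Real.cos γ * (![a0,a1,a2,a3,a4,a5,a6,a7,a8] ⬝ᵥ S2.mulVec ![a0,a1,a2,a3,a4,a5,a6,a7,a8]) - Real.sin γ * (![a0,a1,a2,a3,a4,a5,a6,a7,a8] ⬝ᵥ S3.mulVec ![a0,a1,a2,a3,a4,a5,a6,a7,a8]) := by
  have h4 := hcs γ 4; have g4 := hss γ 4
  have h3 := hcs γ 3; have g3 := hss γ 3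
  have h2 := hcs γ 2; have g2 := hss γ 2
  norm_num at h4 g4 h3 g3 h2 g2
  simp [Rz, S1, S2, S3, S4, S5, Matrix.mulVec, dotProduct, Fin.sum_univ_succ,
    Matrix.diagonal]
  linear_combination (Real.sqrt 3 * (28*(a0*a1 + a7*a8))) * h4
    + (Real.sqrt 3 * (28*(a1*a8 - a0*a7))) * g4
    + (Real.sqrt 3 * Real.sqrt 7 * (10*(a1*a2 + a6*a7))) * h3
    + (Real.sqrt 3 * Real.sqrt 7 * (10*(a2*a7 - a1*a6))) * g3
    + (Real.sqrt 3 * (18*(a2*a3 + a5*a6))) * h2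
    + (Real.sqrt 3 * (18*(a3*a6 - a2*a5))) * g2

private lemma key3 (γ a0 a1 a2 a3 a4 a5 a6 a7 a8 : ℝ) :
    ((Rz γ).mulVec ![a0,a1,a2,a3,a4,a5,a6,a7,a8]) ⬝ᵥ S3.mulVec ((Rz γ).mulVec ![a0,a1,a2,a3,a4,a5,a6,a7,a8])
      = Real.cos γ * (![a0,a1,a2,a3,a4,a5,a6,a7,a8] ⬝ᵥ S3.mulVec ![a0,a1,a2,a3,a4,a5,a6,a7,a8]) + Real.sin γ * (![a0,a1,a2,a3,a4,a5,a6,a7,a8] ⬝ᵥ S2.mulVec ![a0,a1,a2,a3,a4,a5,a6,a7,a8]) := by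
  have h4 := hcs γ 4; have g4 := hss γ 4
  have h3 := hcs γ 3; have g3 := hss γ 3
  have h2 := hcs γ 2; have g2 := hss γ 2
  norm_num at h4 g4 h3 g3 h2 g2
  simp [Rz, S1, S2, S3, S4, S5, Matrix.mulVec, dotProduct, Fin.sum_univ_succ,
    Matrix.diagonal]
  linear_combination (Real.sqrt 3 * (28*(a0*a7 - a1*a8))) * h4
    + (Real.sqrt 3 * (28*(a0*a1 + a7*a8))) * g4
    + (Real.sqrt 3 * Real.sqrt 7 * (10*(a1*a6 - a2*a7))) * h3
    + (Real.sqrt 3 * Real.sqrt 7 * (10*(a1*a2 + a6*a7))) * g3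
    + (Real.sqrt 3 * (18*(a2*a5 - a3*a6))) * h2
    + (Real.sqrt 3 * (18*(a2*a3 + a5*a6))) * g2

private lemma key4 (γ a0 a1 a2 a3 a4 a5 a6 a7 a8 : ℝ) :
    ((Rz γ).mulVec ![a0,a1,a2,a3,a4,a5,a6,a7,a8]) ⬝ᵥ S4.mulVec ((Rz γ).mulVec ![a0,a1,a2,a3,a4,a5,a6,a7,a8])
      = Real.cos (2*γ) * (![a0,a1,a2,a3,a4,a5,a6,a7,a8] ⬝ᵥ S4.mulVec ![a0,a1,a2,a3,a4,a5,a6,a7,a8]) - Real.sin (2*γ) * (![a0,a1,a2,a3,a4,a5,a6,a7,a8] ⬝ᵥ S5.mulVec ![a0,a1,a2,a3,a4,a5,a6,a7,a8]) := by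
  have h4 := hcs2 γ 4; have g4 := hss2 γ 4
  have h3 := hcs2 γ 3; have g3 := hss2 γ 3
  have dc : Real.cos γ ^ 2 - Real.sin γ ^ 2 = Real.cos (2*γ) := by
    have h := Real.cos_add γ γ
    rw [show γ + γ = 2*γ by ring] at h
    linear_combination -h
  have ds : 2 * Real.sin γ * Real.cos γ = Real.sin (2*γ) := (Real.sin_two_mul γ).symm
  norm_num at h4 g4 h3 g3
  simp [Rz, S1, S2, S3, S4, S5, Matrix.mulVec, dotProduct, Fin.sum_univ_succ,
    Matrix.diagonal]
  linear_combination (Real.sqrt 6 * Real.sqrt 7 * (4*(a0*a2 + a6*a8))) * h4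
    + (Real.sqrt 6 * Real.sqrt 7 * (4*(a2*a8 - a0*a6))) * g4
    + (Real.sqrt 6 * Real.sqrt 7 * (6*(a1*a3 + a5*a7))) * h3
    + (Real.sqrt 6 * Real.sqrt 7 * (6*(a3*a7 - a1*a5))) * g3
    + (Real.sqrt 6 * (10*(a3^2 - a5^2))) * dc
    + (Real.sqrt 6 * (20*(a3*a5))) * ds

private lemma key5 (γ a0 a1 a2 a3 a4 a5 a6 a7 a8 : ℝ) :
    ((Rz γ).mulVec ![a0,a1,a2,a3,a4,a5,a6,a7,a8]) ⬝ᵥ S5.mulVec ((Rz γ).mulVec ![a0,a1,a2,a3,a4,a5,a6,a7,a8])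
      = Real.cos (2*γ) * (![a0,a1,a2,a3,a4,a5,a6,a7,a8] ⬝ᵥ S5.mulVec ![a0,a1,a2,a3,a4,a5,a6,a7,a8]) + Real.sin (2*γ) * (![a0,a1,a2,a3,a4,a5,a6,a7,a8] ⬝ᵥ S4.mulVec ![a0,a1,a2,a3,a4,a5,a6,a7,a8]) := by
  have h4 := hcs2 γ 4; have g4 := hss2 γ 4
  have h3 := hcs2 γ 3; have g3 := hss2 γ 3
  have dc : Real.cos γ ^ 2 - Real.sin γ ^ 2 = Real.cos (2*γ) := by
    have h := Real.cos_add γ γ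
    rw [show γ + γ = 2*γ by ring] at h
    linear_combination -h
  have ds : 2 * Real.sin γ * Real.cos γ = Real.sin (2*γ) := (Real.sin_two_mul γ).symm
  norm_num at h4 g4 h3 g3
  simp [Rz, S1, S2, S3, S4, S5, Matrix.mulVec, dotProduct, Fin.sum_univ_succ,
    Matrix.diagonal]
  linear_combination (Real.sqrt 6 * Real.sqrt 7 * (4*(a0*a6 - a2*a8))) * h4
    + (Real.sqrt 6 * Real.sqrt 7 * (4*(a0*a2 + a6*a8))) * g4
    + (Real.sqrt 6 * Real.sqrt 7 * (6*(a1*a5 - a3*a7))) * h3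
    + (Real.sqrt 6 * Real.sqrt 7 * (6*(a1*a3 + a5*a7))) * g3
    + (Real.sqrt 6 * (-20*(a3*a5))) * dc
    + (Real.sqrt 6 * (10*(a3^2 - a5^2))) * ds

end auxRz

/-- d is invariant under R_z(γ). -/
theorem stmt_4 (a : Fin 9 → ℝ) (γ : ℝ) :
    dmeas ((Rz γ).mulVec a) = dmeas a := by
  have p1 := Real.sin_sq_add_cos_sq γ
  have p2 := Real.sin_sq_add_cos_sq (2*γ)
  have ha : a = ![a 0, a 1, a 2, a 3, a 4, a 5, a 6, a 7, a 8] := by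
    funext i; fin_cases i <;> rfl
  rw [ha]
  simp only [dmeas, S, Fin.sum_univ_five, Matrix.cons_val_zero, Matrix.cons_val_one,
    Matrix.head_cons, Matrix.cons_val_succ]
  rw [show (![S1, S2, S3, S4, S5] : Fin 5 → Matrix (Fin 9) (Fin 9) ℝ) 2 = S3 from rfl,
    show (![S1, S2, S3, S4, S5] : Fin 5 → Matrix (Fin 9) (Fin 9) ℝ) 3 = S4 from rfl,
    show (![S1, S2, S3, S4, S5] : Fin 5 → Matrix (Fin 9) (Fin 9) ℝ) 4 = S5 from rfl]
  rw [key1, key2, key3, key4, key5]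
  linear_combination ((![a 0, a 1, a 2, a 3, a 4, a 5, a 6, a 7, a 8] ⬝ᵥ S2.mulVec ![a 0, a 1, a 2, a 3, a 4, a 5, a 6, a 7, a 8])^2 + (![a 0, a 1, a 2, a 3, a 4, a 5, a 6, a 7, a 8] ⬝ᵥ S3.mulVec ![a 0, a 1, a 2, a 3, a 4, a 5, a 6, a 7, a 8])^2) * p1
    + ((![a 0, a 1, a 2, a 3, a 4, a 5, a 6, a 7, a 8] ⬝ᵥ S4.mulVec ![a 0, a 1, a 2, a 3, a 4, a 5, a 6, a 7, a 8])^2 + (![a 0, a 1, a 2, a 3, a 4, a 5, a 6, a 7, a 8] ⬝ᵥ S5.mulVec ![a 0, a 1, a 2, a 3, a 4, a 5, a 6, a 7, a 8])^2) * p2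
end

section
/- For all a ∈ ℝ⁹, d(X · a) = d(a), where X = R_x(π/2) and d(a) = Σ_{k=1}^{5} (aᵀSₖa)². -/
open Matrix Real

lemma h14' : Real.sqrt 14 = Real.sqrt 2 * Real.sqrt 7 := by
  rw [← Real.sqrt_mul (by norm_num)]; norm_num
lemma h35' : Real.sqrt 35 = Real.sqrt 5 * Real.sqrt 7 := by
  rw [← Real.sqrt_mul (by norm_num)]; norm_num
lemma h6' : Real.sqrt 6 = Real.sqrt 2 * Real.sqrt 3 := by
  rw [← Real.sqrt_mul (by norm_num)]; norm_num
lemma p2' : Real.sqrt 2 ^ 2 = 2 := Real.sq_sqrt (by norm_num)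
lemma p3' : Real.sqrt 3 ^ 2 = 3 := Real.sq_sqrt (by norm_num)
lemma p5' : Real.sqrt 5 ^ 2 = 5 := Real.sq_sqrt (by norm_num)
lemma p7' : Real.sqrt 7 ^ 2 = 7 := Real.sq_sqrt (by norm_num)
lemma q2' : Real.sqrt 2 ^ 3 = 2 * Real.sqrt 2 := by rw [pow_succ, p2']
lemma q3' : Real.sqrt 3 ^ 3 = 3 * Real.sqrt 3 := by rw [pow_succ, p3']
lemma q5' : Real.sqrt 5 ^ 3 = 5 * Real.sqrt 5 := by rw [pow_succ, p5']
lemma q7' : Real.sqrt 7 ^ 3 = 7 * Real.sqrt 7 := by rw [pow_succ, p7']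
lemma r2' : Real.sqrt 2 ^ 4 = 4 := by rw [pow_succ, q2']; nlinarith [p2']
lemma r3' : Real.sqrt 3 ^ 4 = 9 := by rw [pow_succ, q3']; nlinarith [p3']
lemma r5' : Real.sqrt 5 ^ 4 = 25 := by rw [pow_succ, q5']; nlinarith [p5']
lemma r7' : Real.sqrt 7 ^ 4 = 49 := by rw [pow_succ, q7']; nlinarith [p7']

set_option maxHeartbeats 1000000 in
lemma quad1 (a : Fin 9 → ℝ) :
    (Xmat.mulVec a) ⬝ᵥ S1.mulVec (Xmat.mulVec a) =
      -(1/2) * (a ⬝ᵥ S1.mulVec a) - (Real.sqrt 3/2) * (a ⬝ᵥ S4.mulVec a) := by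
  simp [S1, S4, Xmat, Matrix.mulVec, dotProduct, Fin.sum_univ_succ,
    Matrix.diagonal, h14', h35', h6']
  ring_nf
  simp only [p2', p3', p5', p7', q2', q3', q5', q7', r2', r3', r5', r7']
  ring

set_option maxHeartbeats 1000000 in
lemma quad2 (a : Fin 9 → ℝ) :
    (Xmat.mulVec a) ⬝ᵥ S2.mulVec (Xmat.mulVec a) = -(a ⬝ᵥ S5.mulVec a) := by
  simp [S2, S5, Xmat, Matrix.mulVec, dotProduct, Fin.sum_univ_succ,
    h14', h35', h6']
  ring_nf
  simp only [p2', p3', p5', p7', q2', q3', q5', q7', r2', r3', r5', r7']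
  ring

set_option maxHeartbeats 1000000 in
lemma quad3 (a : Fin 9 → ℝ) :
    (Xmat.mulVec a) ⬝ᵥ S3.mulVec (Xmat.mulVec a) = -(a ⬝ᵥ S3.mulVec a) := by
  simp [S3, Xmat, Matrix.mulVec, dotProduct, Fin.sum_univ_succ,
    h14', h35', h6']
  ring_nf
  simp only [p2', p3', p5', p7', q2', q3', q5', q7', r2', r3', r5', r7']
  ring

set_option maxHeartbeats 1000000 in
lemma quad4 (a : Fin 9 → ℝ) :
    (Xmat.mulVec a) ⬝ᵥ S4.mulVec (Xmat.mulVec a) =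
      -(Real.sqrt 3/2) * (a ⬝ᵥ S1.mulVec a) + (1/2) * (a ⬝ᵥ S4.mulVec a) := by
  simp [S1, S4, Xmat, Matrix.mulVec, dotProduct, Fin.sum_univ_succ,
    Matrix.diagonal, h14', h35', h6']
  ring_nf
  simp only [p2', p3', p5', p7', q2', q3', q5', q7', r2', r3', r5', r7']
  ring

set_option maxHeartbeats 1000000 in
lemma quad5 (a : Fin 9 → ℝ) :
    (Xmat.mulVec a) ⬝ᵥ S5.mulVec (Xmat.mulVec a) = a ⬝ᵥ S2.mulVec a := by
  simp [S2, S5, Xmat, Matrix.mulVec, dotProduct, Fin.sum_univ_succ,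
    h14', h35', h6']
  ring_nf
  simp only [p2', p3', p5', p7', q2', q3', q5', q7', r2', r3', r5', r7']
  ring

/-- d is invariant under X = R_x(π/2). -/
theorem stmt_5 (a : Fin 9 → ℝ) :
    dmeas (Xmat.mulVec a) = dmeas a := by
  have hS : ∀ b : Fin 9 → ℝ, dmeas b =
      (b ⬝ᵥ S1.mulVec b)^2 + (b ⬝ᵥ S2.mulVec b)^2 + (b ⬝ᵥ S3.mulVec b)^2
      + (b ⬝ᵥ S4.mulVec b)^2 + (b ⬝ᵥ S5.mulVec b)^2 := by
    intro b
    simp [dmeas, S, Fin.sum_univ_five]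
  rw [hS, hS, quad1, quad2, quad3, quad4, quad5]
  linear_combination ((a ⬝ᵥ S1.mulVec a)^2 + (a ⬝ᵥ S4.mulVec a)^2)/4 * p3'
end

section
/- For every γ ∈ ℝ there exists an orthogonal 5×5 real matrix O such that R_z(γ)ᵀ · Sₖ · R_z(γ) = Σ_{j=1}^{5} O_{kj} · Sⱼ for every k = 1,…,5. (The quadratic forms a ↦ aᵀSₖa transform among themselves orthogonally under R_z.) -/
open Matrix Real

/-! The vectors `e p + i • e p.rev` are eigenvectors of `(Rz γ)ᵀ` with eigenvalue
`exp (-i m_p γ)`, where `m_p = zWeight p = 4 - p` (indices counted from 0). Hence a complex matrix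
whose coordinates in the basis of products of these vectors are supported on `m_p + m_q = w` is
multiplied by `exp (-i w γ)` under `W ↦ (Rz γ)ᵀ W (Rz γ)`. The matrices `S1`, `S2 - i S3` and
`S4 - i S5` have weights `0`, `1` and `2` (a finite check of linear relations between their
entries, independent of `γ`), so taking real and imaginary parts, `Rz γ` acts on the span of
`S1, …, S5` by the rotation `diag(1, R(γ), R(2γ))`. -/

section WeightDecomposition

open Complex

def zWeight : Fin 9 → ℝ := ![4, 3, 2, 1, 0, -1, -2, -3, -4]

theorem zWeight_rev (i : Fin 9) : zWeight i.rev = -zWeight i := by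
  fin_cases i <;> simp [zWeight, Fin.rev]

theorem Rz_apply (γ : ℝ) (i j : Fin 9) :
    Rz γ i j = (if i = j then Real.cos (zWeight j * γ) else 0) -
      (if i = j.rev then Real.sin (zWeight j * γ) else 0) := by
  fin_cases i <;> fin_cases j <;> simp [Rz, zWeight, Fin.rev, Fin.ext_iff]

noncomputable def weightBasis : Matrix (Fin 9) (Fin 9) ℂ :=
  of fun i j => (if i = j then 1 else 0) + (if i = j.rev then I else 0)

noncomputable def weightBasisInv : Matrix (Fin 9) (Fin 9) ℂ :=
  (1 / 2 : ℂ) • of fun i j => (if i = j then 1 else 0) - (if i = j.rev then I else 0)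

theorem weightBasis_mul_weightBasisInv : weightBasis * weightBasisInv = 1 := by
  ext i j
  simp only [weightBasis, weightBasisInv, mul_apply, of_apply, add_mul, ite_mul, one_mul, zero_mul,
    ← Fin.rev_eq_iff, Finset.sum_add_distrib, Finset.sum_ite_eq,
    Finset.mem_univ, if_true, Matrix.smul_apply, smul_eq_mul, one_apply, Fin.rev_rev]
  split_ifs <;> ring_nf <;> norm_num [I_sq]

theorem exp_neg_ofReal_mul_I (x : ℝ) : exp (-(x : ℂ) * I) = Real.cos x - Real.sin x * I := by
  rw [← ofReal_neg, exp_mul_I, ← ofReal_cos, ← ofReal_sin, Real.cos_neg, Real.sin_neg, ofReal_neg]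
  ring

theorem transpose_Rz_mul_weightBasis (γ : ℝ) :
    ((Rz γ).map ofReal)ᵀ * weightBasis =
      weightBasis * diagonal (fun p => exp (-↑(zWeight p * γ) * I)) := by
  ext i p
  rw [mul_diagonal]
  simp only [mul_apply, transpose_apply, map_apply, Rz_apply, ofReal_sub, apply_ite ofReal,
    ofReal_zero, sub_mul, ite_mul, zero_mul, Finset.sum_sub_distrib, Finset.sum_ite_eq',
    Finset.mem_univ, if_true, weightBasis, of_apply, exp_neg_ofReal_mul_I]
  rcases eq_or_ne p i with rfl | hpi
  · by_cases hp : p.rev = p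
    · have h0 : zWeight p = 0 := by linarith [hp ▸ zWeight_rev p]
      simp [hp, h0]
    · simp [hp, Ne.symm hp]
  rcases eq_or_ne p i.rev with rfl | hpi'
  · simp only [Fin.rev_rev, zWeight_rev, if_pos, if_neg hpi, if_neg (Ne.symm hpi), neg_mul,
      Real.cos_neg, Real.sin_neg, ofReal_neg]
    ring_nf
    rw [I_sq]
    ring
  · have : i ≠ p.rev := fun h => hpi' (h ▸ (Fin.rev_rev p).symm)
    simp [Ne.symm hpi, this, Fin.rev_eq_iff]

/-- `weightBasisInv * W * weightBasisInvᵀ` is the coefficient matrix `α` of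
`W = weightBasis * α * weightBasisᵀ`. -/
def IsWeight (w : ℝ) (W : Matrix (Fin 9) (Fin 9) ℂ) : Prop :=
  ∀ p q, zWeight p + zWeight q ≠ w → (weightBasisInv * W * weightBasisInvᵀ) p q = 0

theorem transpose_Rz_mul_mul_Rz_of_isWeight (γ w : ℝ) (W : Matrix (Fin 9) (Fin 9) ℂ)
    (hW : IsWeight w W) :
    ((Rz γ).map ofReal)ᵀ * W * (Rz γ).map ofReal = exp (-↑(w * γ) * I) • W := by
  set D := diagonal (fun p => exp (-↑(zWeight p * γ) * I))
  set α := weightBasisInv * W * weightBasisInvᵀ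
  have hW_eq : W = weightBasis * α * weightBasisᵀ := by
    simp only [α, Matrix.mul_assoc, ← transpose_mul, weightBasis_mul_weightBasisInv, transpose_one,
      Matrix.mul_one]
    simp only [← Matrix.mul_assoc, weightBasis_mul_weightBasisInv, Matrix.one_mul]
  have hRz : weightBasisᵀ * (Rz γ).map ofReal = D * weightBasisᵀ := by
    rw [← transpose_transpose ((Rz γ).map ofReal), ← transpose_mul, transpose_Rz_mul_weightBasis,
      transpose_mul, diagonal_transpose]
  have hDαD : D * α * D = exp (-↑(w * γ) * I) • α := by
    ext p q
    rw [mul_diagonal, diagonal_mul, Matrix.smul_apply, smul_eq_mul]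
    by_cases hpq : zWeight p + zWeight q = w
    · rw [← hpq, mul_comm _ (α p q), mul_assoc, ← Complex.exp_add]
      push_cast
      ring_nf
    · rw [show α p q = 0 from hW p q hpq]
      simp
  calc ((Rz γ).map ofReal)ᵀ * W * (Rz γ).map ofReal
      = (((Rz γ).map ofReal)ᵀ * weightBasis) * α * (weightBasisᵀ * (Rz γ).map ofReal) := by
        rw [hW_eq]; simp only [Matrix.mul_assoc]
    _ = weightBasis * (D * α * D) * weightBasisᵀ := by
        rw [transpose_Rz_mul_weightBasis, hRz]; simp only [Matrix.mul_assoc]; rfl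
    _ = exp (-↑(w * γ) * I) • W := by
        rw [hDαD, hW_eq, Matrix.mul_smul, Matrix.smul_mul]

theorem map_ofReal_transpose_Rz_mul_mul_Rz (γ : ℝ) (M : Matrix (Fin 9) (Fin 9) ℝ) :
    ((Rz γ)ᵀ * M * Rz γ).map ofReal =
      ((Rz γ).map ofReal)ᵀ * M.map ofReal * (Rz γ).map ofReal := by
  change ((Rz γ)ᵀ * M * Rz γ).map ofRealHom = _
  rw [Matrix.map_mul, Matrix.map_mul, transpose_map]
  rfl

theorem transpose_Rz_mul_mul_Rz_of_isWeight_sub_I_smul (γ w : ℝ) (A B : Matrix (Fin 9) (Fin 9) ℝ)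
    (h : IsWeight w (A.map ofReal - I • B.map ofReal)) :
    (Rz γ)ᵀ * A * Rz γ = Real.cos (w * γ) • A - Real.sin (w * γ) • B ∧
      (Rz γ)ᵀ * B * Rz γ = Real.sin (w * γ) • A + Real.cos (w * γ) • B := by
  have key := transpose_Rz_mul_mul_Rz_of_isWeight γ w _ h
  rw [Matrix.mul_sub, Matrix.sub_mul, Matrix.mul_smul, Matrix.smul_mul,
    ← map_ofReal_transpose_Rz_mul_mul_Rz, ← map_ofReal_transpose_Rz_mul_mul_Rz,
    exp_neg_ofReal_mul_I] at key
  constructor <;> ext i j <;> have hij := congrFun₂ key i j <;>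
    simp only [Complex.ext_iff, Matrix.sub_apply, Matrix.add_apply, Matrix.smul_apply, map_apply,
      smul_eq_mul, sub_re, sub_im, mul_re, mul_im, ofReal_re, ofReal_im, I_re, I_im] at hij ⊢
  · linarith [hij.1]
  · linarith [hij.2]

theorem weightBasisInv_mul_mul_transpose_apply (W : Matrix (Fin 9) (Fin 9) ℂ) (p q : Fin 9) :
    (weightBasisInv * W * weightBasisInvᵀ) p q =
      (W p q - I * W p.rev q - I * W p q.rev - W p.rev q.rev) / 4 := by
  simp only [weightBasisInv, mul_apply, transpose_apply, Matrix.smul_apply, Matrix.smul_mul, of_apply,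
    smul_eq_mul, sub_mul, mul_sub, ite_mul, mul_ite, one_mul, mul_one,
    zero_mul, mul_zero, ← Fin.rev_eq_iff, Finset.sum_sub_distrib, Finset.sum_ite_eq,
    Finset.mem_univ, if_true]
  linear_combination W p.rev q.rev / 4 * I_sq

theorem isWeight_map_ofReal_sub_I_smul (w : ℝ) (A B : Matrix (Fin 9) (Fin 9) ℝ)
    (h : ∀ p q, zWeight p + zWeight q ≠ w →
      A p q - B p.rev q - B p q.rev - A p.rev q.rev = 0 ∧
        B p q + A p.rev q + A p q.rev - B p.rev q.rev = 0) :
    IsWeight w (A.map ofReal - I • B.map ofReal) := by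
  intro p q hpq
  obtain ⟨hre, him⟩ := h p q hpq
  rw [weightBasisInv_mul_mul_transpose_apply, div_eq_zero_iff,
    or_iff_left (by norm_num : (4 : ℂ) ≠ 0)]
  apply Complex.ext <;>
    simp only [Matrix.sub_apply, Matrix.smul_apply, map_apply, smul_eq_mul, sub_re, sub_im, mul_re,
      mul_im, ofReal_re, ofReal_im, I_re, I_im, zero_re, zero_im] <;>
    linarith

theorem isWeight_S1 :
    IsWeight 0 (S1.map ofReal - I • (0 : Matrix (Fin 9) (Fin 9) ℝ).map ofReal) := by
  refine isWeight_map_ofReal_sub_I_smul _ _ _ fun p q hpq => ?_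
  fin_cases p <;> fin_cases q <;> norm_num [zWeight] at hpq <;> simp [S1, Fin.rev, diagonal]

theorem isWeight_S2_S3 : IsWeight 1 (S2.map ofReal - I • S3.map ofReal) := by
  refine isWeight_map_ofReal_sub_I_smul _ _ _ fun p q hpq => ?_
  fin_cases p <;> fin_cases q <;> norm_num [zWeight] at hpq <;> simp [S2, S3, Fin.rev]

theorem isWeight_S4_S5 : IsWeight 2 (S4.map ofReal - I • S5.map ofReal) := by
  refine isWeight_map_ofReal_sub_I_smul _ _ _ fun p q hpq => ?_
  fin_cases p <;> fin_cases q <;> norm_num [zWeight] at hpq <;> simp [S4, S5, Fin.rev]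

end WeightDecomposition

noncomputable def rotQuadrics (γ : ℝ) : Matrix (Fin 5) (Fin 5) ℝ :=
  !![1, 0, 0, 0, 0;
     0, Real.cos γ, -Real.sin γ, 0, 0;
     0, Real.sin γ, Real.cos γ, 0, 0;
     0, 0, 0, Real.cos (2 * γ), -Real.sin (2 * γ);
     0, 0, 0, Real.sin (2 * γ), Real.cos (2 * γ)]

theorem rotQuadrics_mul_transpose (γ : ℝ) : rotQuadrics γ * (rotQuadrics γ)ᵀ = 1 := by
  ext i j
  fin_cases i <;> fin_cases j <;>
    simp [rotQuadrics, mul_apply, Fin.sum_univ_five, one_apply, mul_comm, ← sq]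

/-- the quadratic forms Sₖ transform among themselves orthogonally under R_z. -/
theorem stmt_6 (γ : ℝ) :
    ∃ O : Matrix (Fin 5) (Fin 5) ℝ, O * Oᵀ = 1 ∧
      ∀ k : Fin 5, (Rz γ)ᵀ * S k * Rz γ = ∑ j : Fin 5, O k j • S j := by
  have h1 := (transpose_Rz_mul_mul_Rz_of_isWeight_sub_I_smul γ 0 S1 0 isWeight_S1).1
  obtain ⟨h2, h3⟩ := transpose_Rz_mul_mul_Rz_of_isWeight_sub_I_smul γ 1 S2 S3 isWeight_S2_S3
  obtain ⟨h4, h5⟩ := transpose_Rz_mul_mul_Rz_of_isWeight_sub_I_smul γ 2 S4 S5 isWeight_S4_S5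
  refine ⟨rotQuadrics γ, rotQuadrics_mul_transpose γ, fun k => ?_⟩
  fin_cases k <;> simp [Fin.sum_univ_five, rotQuadrics, S, sub_eq_add_neg, h1, h2, h3, h4, h5]
end

section
/- For every α ∈ ℝ the matrix R_x(α) is orthogonal (R_x(α) · R_x(α)ᵀ = I₉), and for all α₁, α₂ ∈ ℝ, R_x(α₁) · R_x(α₂) = R_x(α₁ + α₂). -/
open Matrix Real

section Vec9
variable {α : Type*} (x0 x1 x2 x3 x4 x5 x6 x7 x8 : α)
@[simp] lemma vec9_0 : ![x0,x1,x2,x3,x4,x5,x6,x7,x8] 0 = x0 := rfl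
@[simp] lemma vec9_1 : ![x0,x1,x2,x3,x4,x5,x6,x7,x8] 1 = x1 := rfl
@[simp] lemma vec9_2 : ![x0,x1,x2,x3,x4,x5,x6,x7,x8] 2 = x2 := rfl
@[simp] lemma vec9_3 : ![x0,x1,x2,x3,x4,x5,x6,x7,x8] 3 = x3 := rfl
@[simp] lemma vec9_4 : ![x0,x1,x2,x3,x4,x5,x6,x7,x8] 4 = x4 := rfl
@[simp] lemma vec9_5 : ![x0,x1,x2,x3,x4,x5,x6,x7,x8] 5 = x5 := rfl
@[simp] lemma vec9_6 : ![x0,x1,x2,x3,x4,x5,x6,x7,x8] 6 = x6 := rfl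
@[simp] lemma vec9_7 : ![x0,x1,x2,x3,x4,x5,x6,x7,x8] 7 = x7 := rfl
@[simp] lemma vec9_8 : ![x0,x1,x2,x3,x4,x5,x6,x7,x8] 8 = x8 := rfl
@[simp] lemma vec9m_0 (h) : ![x0,x1,x2,x3,x4,x5,x6,x7,x8] ⟨0,h⟩ = x0 := rfl
@[simp] lemma vec9m_1 (h) : ![x0,x1,x2,x3,x4,x5,x6,x7,x8] ⟨1,h⟩ = x1 := rfl
@[simp] lemma vec9m_2 (h) : ![x0,x1,x2,x3,x4,x5,x6,x7,x8] ⟨2,h⟩ = x2 := rfl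
@[simp] lemma vec9m_3 (h) : ![x0,x1,x2,x3,x4,x5,x6,x7,x8] ⟨3,h⟩ = x3 := rfl
@[simp] lemma vec9m_4 (h) : ![x0,x1,x2,x3,x4,x5,x6,x7,x8] ⟨4,h⟩ = x4 := rfl
@[simp] lemma vec9m_5 (h) : ![x0,x1,x2,x3,x4,x5,x6,x7,x8] ⟨5,h⟩ = x5 := rfl
@[simp] lemma vec9m_6 (h) : ![x0,x1,x2,x3,x4,x5,x6,x7,x8] ⟨6,h⟩ = x6 := rfl
@[simp] lemma vec9m_7 (h) : ![x0,x1,x2,x3,x4,x5,x6,x7,x8] ⟨7,h⟩ = x7 := rfl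
@[simp] lemma vec9m_8 (h) : ![x0,x1,x2,x3,x4,x5,x6,x7,x8] ⟨8,h⟩ = x8 := rfl
end Vec9

lemma sum_univ_nine {M : Type*} [AddCommMonoid M] (f : Fin 9 → M) :
    ∑ i : Fin 9, f i = f 0 + f 1 + f 2 + f 3 + f 4 + f 5 + f 6 + f 7 + f 8 := by
  rw [Fin.sum_univ_castSucc, Fin.sum_univ_eight]; rfl

set_option maxHeartbeats 4000000 in
lemma Rz_mul (a b : ℝ) : Rz a * Rz b = Rz (a + b) := by
  ext i j
  rw [Matrix.mul_apply, sum_univ_nine]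
  fin_cases i <;> fin_cases j <;>
    simp only [Rz, Matrix.of_apply,
      vec9_0, vec9_1, vec9_2, vec9_3, vec9_4, vec9_5, vec9_6, vec9_7, vec9_8,
      vec9m_0, vec9m_1, vec9m_2, vec9m_3, vec9m_4, vec9m_5, vec9m_6, vec9m_7, vec9m_8,
      mul_zero, zero_mul, add_zero, zero_add, neg_zero, mul_add,
      Real.cos_add, Real.sin_add] <;>
    ring

set_option maxHeartbeats 1000000 in
lemma Rz_zero : Rz 0 = 1 := by
  have h1 : (1 : Matrix (Fin 9) (Fin 9) ℝ) =
      !![1,0,0,0,0,0,0,0,0; 0,1,0,0,0,0,0,0,0; 0,0,1,0,0,0,0,0,0;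
         0,0,0,1,0,0,0,0,0; 0,0,0,0,1,0,0,0,0; 0,0,0,0,0,1,0,0,0;
         0,0,0,0,0,0,1,0,0; 0,0,0,0,0,0,0,1,0; 0,0,0,0,0,0,0,0,1] := by
    ext i j; fin_cases i <;> fin_cases j <;> rfl
  rw [h1]
  ext i j
  fin_cases i <;> fin_cases j <;>
    simp only [Rz, Matrix.of_apply, mul_zero, Real.cos_zero, Real.sin_zero,
      vec9_0, vec9_1, vec9_2, vec9_3, vec9_4, vec9_5, vec9_6, vec9_7, vec9_8,
      vec9m_0, vec9m_1, vec9m_2, vec9m_3, vec9m_4, vec9m_5, vec9m_6, vec9m_7, vec9m_8,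
      neg_zero]

set_option maxHeartbeats 1000000 in
lemma Rz_transpose (a : ℝ) : (Rz a)ᵀ = Rz (-a) := by
  ext i j
  rw [Matrix.transpose_apply]
  fin_cases i <;> fin_cases j <;>
    simp only [Rz, Matrix.of_apply, mul_neg, Real.cos_neg, Real.sin_neg, neg_neg, neg_zero,
      vec9_0, vec9_1, vec9_2, vec9_3, vec9_4, vec9_5, vec9_6, vec9_7, vec9_8,
      vec9m_0, vec9m_1, vec9m_2, vec9m_3, vec9m_4, vec9m_5, vec9m_6, vec9m_7, vec9m_8]

set_option maxHeartbeats 4000000 in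
lemma Xmat_mul_transpose : Xmat * Xmatᵀ = 1 := by
  have h35 : Real.sqrt 35 = Real.sqrt 5 * Real.sqrt 7 := by
    rw [← Real.sqrt_mul (by norm_num)]; norm_num
  have h14 : Real.sqrt 14 = Real.sqrt 2 * Real.sqrt 7 := by
    rw [← Real.sqrt_mul (by norm_num)]; norm_num
  have h2 : Real.sqrt 2 ^ 2 = 2 := Real.sq_sqrt (by norm_num)
  have h5 : Real.sqrt 5 ^ 2 = 5 := Real.sq_sqrt (by norm_num)
  have h7 : Real.sqrt 7 ^ 2 = 7 := Real.sq_sqrt (by norm_num)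
  have hone : (1 : Matrix (Fin 9) (Fin 9) ℝ) =
      !![1,0,0,0,0,0,0,0,0; 0,1,0,0,0,0,0,0,0; 0,0,1,0,0,0,0,0,0;
         0,0,0,1,0,0,0,0,0; 0,0,0,0,1,0,0,0,0; 0,0,0,0,0,1,0,0,0;
         0,0,0,0,0,0,1,0,0; 0,0,0,0,0,0,0,1,0; 0,0,0,0,0,0,0,0,1] := by
    ext i j; fin_cases i <;> fin_cases j <;> rfl
  rw [hone]
  ext i j
  rw [Matrix.mul_apply, sum_univ_nine]
  simp only [Matrix.transpose_apply]
  fin_cases i <;> fin_cases j <;>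
    simp only [Xmat, Matrix.smul_apply, Matrix.of_apply, smul_eq_mul, h35, h14,
      vec9_0, vec9_1, vec9_2, vec9_3, vec9_4, vec9_5, vec9_6, vec9_7, vec9_8,
      vec9m_0, vec9m_1, vec9m_2, vec9m_3, vec9m_4, vec9m_5, vec9m_6, vec9m_7, vec9m_8,
      mul_zero, zero_mul, add_zero, zero_add, neg_zero] <;>
    nlinarith [h2, h5, h7, Real.sqrt_nonneg 2, Real.sqrt_nonneg 5, Real.sqrt_nonneg 7]

lemma Xmat_transpose_mul : Xmatᵀ * Xmat = 1 :=
  mul_eq_one_comm.mp Xmat_mul_transpose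

lemma conjT_mul (Q A B : Matrix (Fin 9) (Fin 9) ℝ) (h : Q * Qᵀ = 1) :
    (Qᵀ * A * Q) * (Qᵀ * B * Q) = Qᵀ * (A * B) * Q := by
  have h' : Qᵀ * Q = 1 := mul_eq_one_comm.mp h
  simp only [Matrix.mul_assoc]
  rw [← Matrix.mul_assoc Q Qᵀ, h, Matrix.one_mul]

lemma conjX_mul (Q A B : Matrix (Fin 9) (Fin 9) ℝ) (h : Qᵀ * Q = 1) :
    (Q * A * Qᵀ) * (Q * B * Qᵀ) = Q * (A * B) * Qᵀ := by
  simp only [Matrix.mul_assoc]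
  rw [← Matrix.mul_assoc Qᵀ Q, h, Matrix.one_mul]

lemma Ry_orth (b : ℝ) : Ry b * (Ry b)ᵀ = 1 := by
  have : (Ry b)ᵀ = Xmat * Rz (-b) * Xmatᵀ := by
    simp only [Ry, Matrix.transpose_mul, Matrix.transpose_transpose, Rz_transpose,
      Matrix.mul_assoc]
  rw [this, Ry, conjX_mul Xmat _ _ Xmat_transpose_mul, Rz_mul, add_neg_cancel, Rz_zero,
    Matrix.mul_one, Xmat_mul_transpose]


/-- R_x(α) is orthogonal and the matrices R_x form a one-parameter group. -/
theorem stmt_12 :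
    (∀ α : ℝ, Rx α * (Rx α)ᵀ = 1) ∧
    (∀ α₁ α₂ : ℝ, Rx α₁ * Rx α₂ = Rx (α₁ + α₂)) := by
  have hQ : Ry (Real.pi/2) * (Ry (Real.pi/2))ᵀ = 1 := Ry_orth _
  have hQ' : (Ry (Real.pi/2))ᵀ * Ry (Real.pi/2) = 1 := mul_eq_one_comm.mp hQ
  constructor
  · intro α
    have ht : (Rx α)ᵀ = (Ry (Real.pi/2))ᵀ * Rz (-α) * Ry (Real.pi/2) := by
      simp only [Rx, Matrix.transpose_mul, Matrix.transpose_transpose, Rz_transpose,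
        Matrix.mul_assoc]
    rw [ht, Rx, conjT_mul _ _ _ hQ, Rz_mul, add_neg_cancel, Rz_zero, Matrix.mul_one, hQ']
  · intro α₁ α₂
    rw [Rx, Rx, Rx, conjT_mul _ _ _ hQ, Rz_mul]
end

section
/- Every matrix M in the multiplicative subgroup of GL₉(ℝ) generated by the two matrices R_z(π/2) and X = R_x(π/2) fixes the reference vector: M · ã = ã. (The octahedral symmetry group of the reference harmonic stabilizes ã.) -/
open Matrix Real

/-!
The matrices of `GL₉(ℝ)` fixing `ã` form a subgroup, so it suffices that both generators fix `ã`.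
Only the coordinates of `ã` along `Y₄,₀` and `Y₄,₄` are nonzero, and `R_z(π/2)` rotates the latter
by `4 · π/2 = 2π`. For `X` the check reduces to `√35 · √5 = 5√7` and `√35 · √7 = 7√5`.
-/

namespace Matrix.GeneralLinearGroup

variable {n R : Type*} [Fintype n] [DecidableEq n] [CommRing R]

def mulVecStabilizer (v : n → R) : Subgroup (GL n R) where
  carrier := {g | (g : Matrix n n R) *ᵥ v = v}
  one_mem' := one_mulVec v
  mul_mem' {g h} (hg : _ = v) (hh : _ = v) := by
    change ((g * h : GL n R) : Matrix n n R) *ᵥ v = v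
    rw [Units.val_mul, ← mulVec_mulVec, hh, hg]
  inv_mem' {g} (hg : _ = v) := by
    change ((g⁻¹ : GL n R) : Matrix n n R) *ᵥ v = v
    conv_lhs => rw [← hg]
    rw [mulVec_mulVec, ← Units.val_mul, inv_mul_cancel, Units.val_one, one_mulVec]

theorem mulVec_eq_self_of_mem_closure {s : Set (GL n R)} {v : n → R}
    (hs : ∀ g ∈ s, (g : Matrix n n R) *ᵥ v = v) {g : GL n R} (hg : g ∈ Subgroup.closure s) :
    (g : Matrix n n R) *ᵥ v = v :=
  (Subgroup.closure_le (mulVecStabilizer v)).2 hs hg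

end Matrix.GeneralLinearGroup

theorem sqrt_thirtyFive_mul_sqrt_five : √35 * √5 = 5 * √7 := by
  rw [← Real.sqrt_mul (by norm_num), show (35 : ℝ) * 5 = 5 ^ 2 * 7 by norm_num,
    Real.sqrt_mul (by norm_num), Real.sqrt_sq (by norm_num)]

theorem sqrt_thirtyFive_mul_sqrt_seven : √35 * √7 = 7 * √5 := by
  rw [← Real.sqrt_mul (by norm_num), show (35 : ℝ) * 7 = 7 ^ 2 * 5 by norm_num,
    Real.sqrt_mul (by norm_num), Real.sqrt_sq (by norm_num)]

theorem Rz_pi_div_two_mulVec_aref : Rz (π / 2) *ᵥ aref = aref := by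
  simp only [Rz, aref, cons_mulVec, cons_dotProduct, dotProduct_of_isEmpty, empty_mulVec,
    head_cons, tail_cons, show (4 : ℝ) * (π / 2) = 2 * π by ring, Real.sin_two_pi,
    Real.cos_two_pi]
  simp only [vecCons, Fin.cons_inj, and_true]
  norm_num

theorem Xmat_mulVec_aref : Xmat *ᵥ aref = aref := by
  simp only [Xmat, aref, smul_mulVec, cons_mulVec, cons_dotProduct, dotProduct_of_isEmpty,
    empty_mulVec, smul_cons, smul_empty, smul_eq_mul, head_cons, tail_cons]
  simp only [vecCons, Fin.cons_inj, and_true]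
  norm_num
  refine ⟨?_, ?_, ?_⟩
  · linear_combination (√12)⁻¹ / 8 * sqrt_thirtyFive_mul_sqrt_five
  · ring
  · linear_combination (√12)⁻¹ / 8 * sqrt_thirtyFive_mul_sqrt_seven

/-- every element of the subgroup of GL₉(ℝ) generated by R_z(π/2) and X
fixes the reference vector ã. -/
theorem stmt_16 (M : GL (Fin 9) ℝ)
    (hM : M ∈ Subgroup.closure
      {w : GL (Fin 9) ℝ | (w : Matrix (Fin 9) (Fin 9) ℝ) = Rz (Real.pi/2) ∨
                          (w : Matrix (Fin 9) (Fin 9) ℝ) = Xmat}) :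
    (M : Matrix (Fin 9) (Fin 9) ℝ).mulVec aref = aref := by
  refine GeneralLinearGroup.mulVec_eq_self_of_mem_closure ?_ hM
  rintro w (hw | hw) <;> rw [hw]
  · exact Rz_pi_div_two_mulVec_aref
  · exact Xmat_mulVec_aref
end
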